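/- Let A_Γ be a T-algebra on Γ = 2^{<ω₁} (so that X(Γ) = 2^{ω₁}), and suppose that in the Stone topology on X(Γ) no injective sequence converges. Then for every x ∈ 2^{ω₁}, the space Y_x — the set ω₁ with the subspace topology inherited from (ω₁+1, τ(A_{Γ,x})) — is sequentially compact: every sequence in Y_x has a subsequence converging to a point of Y_x. -/

import Mathlib

open Set

noncomputable section

/-- The least uncountable ordinal `ω₁`. -/
def omega1 : Ordinal := (Cardinal.aleph 1).ord

/-- `⋃_{γ ∈ F} a_γ` for a finite set `F` of indices. -/
def unionFin (a : Ordinal → Set ℕ) (F : Finset Ordinal) : Set ℕ :=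
  ⋃ γ ∈ F, a γ

/-- A sequence of subsets of `ℕ`, with indices from a (downward closed) domain `D`
of ordinals, is coherent if for all `α ≤ β` in the domain there is a finite `F ⊆ α`
with `a α ∩ a β ⊆ ⋃_{γ∈F} a γ` or `a α ⊆ a β ∪ ⋃_{γ∈F} a γ`. -/
def CoherentOn (D : Set Ordinal) (a : Ordinal → Set ℕ) : Prop :=
  ∀ α β : Ordinal, α ≤ β → β ∈ D →
    ∃ F : Finset Ordinal, (∀ γ ∈ F, γ < α) ∧
      (a α ∩ a β ⊆ unionFin a F ∨ a α ⊆ a β ∪ unionFin a F)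

/-- Properness: no `a β` is contained in a finite union of earlier terms. -/
def ProperOn (D : Set Ordinal) (a : Ordinal → Set ℕ) : Prop :=
  ∀ β ∈ D, ∀ F : Finset Ordinal, (∀ γ ∈ F, γ < β) → ¬ a β ⊆ unionFin a F

/-- `â_β = { α ≤ β : a α ∖ a β ⊆ ⋃_{γ∈F} a γ for some finite F ⊆ α }`. -/
def hatA (a : Ordinal → Set ℕ) (β : Ordinal) : Set Ordinal :=
  { α | α ≤ β ∧ ∃ F : Finset Ordinal, (∀ γ ∈ F, γ < α) ∧ a α \ a β ⊆ unionFin a F }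

/-- The topology `τ(A)` on `λ + 1 = {α : α ≤ λ}` generated by the subbase
consisting of the sets `â_β` and their complements, `β < λ`. -/
def tau (lam : Ordinal) (a : Ordinal → Set ℕ) :
    TopologicalSpace {α : Ordinal // α ≤ lam} :=
  TopologicalSpace.generateFrom
    { s | ∃ β < lam, s = {x : {α : Ordinal // α ≤ lam} | x.1 ∈ hatA a β} ∨
                     s = {x : {α : Ordinal // α ≤ lam} | x.1 ∈ hatA a β}ᶜ }

/-- The subspace `ω₁ = {α : α < ω₁}` of `(ω₁+1, τ(A))`. -/
def tauSub (a : Ordinal → Set ℕ) : TopologicalSpace {y : Ordinal // y < omega1} :=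
  TopologicalSpace.induced
    (fun y : {y : Ordinal // y < omega1} => (⟨y.1, y.2.le⟩ : {α : Ordinal // α ≤ omega1}))
    (tau omega1 a)

/-- Closed unbounded subsets of `ω₁`. -/
def IsClubOmega1 (C : Set Ordinal) : Prop :=
  C ⊆ Iio omega1 ∧
  (∀ α < omega1, ∃ β ∈ C, α ≤ β) ∧
  (∀ δ, δ < omega1 → δ ≠ 0 → (∀ α < δ, ∃ β ∈ C, α < β ∧ β < δ) → δ ∈ C)

/-- Stationary subsets of `ω₁`: sets meeting every club. -/
def IsStationaryOmega1 (S : Set Ordinal) : Prop :=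
  ∀ C : Set Ordinal, IsClubOmega1 C → (S ∩ C).Nonempty

/-- The stationary covering property for a coherent sequence whose index domain is `D`:
if the sequence has length `ω₁` (i.e. `Iio ω₁ ⊆ D`), then every stationary `S ⊆ ω₁`
together with some finite `F` covers, i.e. `⋃_{γ ∈ S ∪ F} â_γ = ω₁`.  (Sequences of
length `< ω₁` have the ScP by convention.) -/
def HasScP (D : Set Ordinal) (a : Ordinal → Set ℕ) : Prop :=
  Iio omega1 ⊆ D →
    ∀ S : Set Ordinal, S ⊆ Iio omega1 → IsStationaryOmega1 S →
      ∃ F : Finset Ordinal, (⋃ γ ∈ S ∪ (↑F : Set Ordinal), hatA a γ) = Iio omega1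

/-- A node of the tree `2^{≤ω₁}`: a function `val` defined on the ordinals `< len`
(with the canonical value `false` beyond `len`). -/
structure Node where
  len : Ordinal
  val : Ordinal → Bool
  canon : ∀ α, len ≤ α → val α = false

open Classical in
/-- The restriction `x ↾ β`. -/
def Node.restrict (x : Node) (β : Ordinal) : Node where
  len := β
  val := fun α => if α < β then x.val α else false
  canon := fun α h => if_neg (not_lt.2 h)

/-- `τ.Extends σ` means `σ ⊆ τ`, i.e. `τ` extends `σ`. -/
def Node.Extends (τ σ : Node) : Prop :=
  σ.len ≤ τ.len ∧ ∀ α < σ.len, τ.val α = σ.val α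

/-- Successor ordinals. -/
def IsSucc (o : Ordinal) : Prop := ∃ β, o = β + 1

open Classical in
/-- `σ†`: if `σ` has successor length `β+1`, the node agreeing with `σ` except at `β`;
otherwise `σ` itself. -/
def Node.dagger (σ : Node) : Node :=
  if h : IsSucc σ.len then
    { len := σ.len
      val := fun α => if α = Classical.choose h then !(σ.val α) else σ.val α
      canon := by
        intro α hα
        have hs := Classical.choose_spec h
        have hne : α ≠ Classical.choose h := by
          intro he
          rw [hs, he] at hα
          rw [Ordinal.add_one_eq_succ] at hα
          exact (not_le.2 (Order.lt_succ (Classical.choose h))) hα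
        show (if α = Classical.choose h then !(σ.val α) else σ.val α) = false
        rw [if_neg hne]
        exact σ.canon α hα }
  else σ

open Classical in
/-- `σ ⌢ b` : the node `σ` extended by one value `b`. -/
def Node.snoc (σ : Node) (b : Bool) : Node where
  len := σ.len + 1
  val := fun α => if α = σ.len then b else σ.val α
  canon := by
    intro α hα
    have h1 : σ.len < α := by
      have h2 : σ.len < σ.len + 1 := by
        rw [Ordinal.add_one_eq_succ]; exact Order.lt_succ σ.len
      exact lt_of_lt_of_le h2 hα
    show (if α = σ.len then b else σ.val α) = false
    rw [if_neg h1.ne']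
    exact σ.canon α h1.le

open Classical in
/-- `x ⌢ σ` : concatenation of nodes. -/
def Node.append (x σ : Node) : Node where
  len := x.len + σ.len
  val := fun α => if α < x.len then x.val α else σ.val (α - x.len)
  canon := by
    intro α hα
    have h1 : ¬ α < x.len := not_lt.2 (le_trans (le_self_add : x.len ≤ x.len + σ.len) hα)
    show (if α < x.len then x.val α else σ.val (α - x.len)) = false
    rw [if_neg h1]
    apply σ.canon
    by_contra h2
    rw [not_le] at h2
    have h3 : α ≤ x.len + (α - x.len) := Ordinal.le_add_sub α x.len
    have h4 : x.len + (α - x.len) < x.len + σ.len := (add_lt_add_iff_left x.len).2 h2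
    exact absurd hα (not_le.2 (lt_of_le_of_lt h3 h4))

/-- A subtree of `2^{<ω₁}` that is downward closed, twinned and has no maximal elements. -/
structure GoodTree (Γ : Set Node) : Prop where
  lt_omega1 : ∀ σ ∈ Γ, σ.len < omega1
  downward : ∀ σ ∈ Γ, ∀ β ≤ σ.len, σ.restrict β ∈ Γ
  twinned : ∀ σ ∈ Γ, σ.dagger ∈ Γ
  noMax : ∀ σ ∈ Γ, ∃ τ ∈ Γ, σ.len < τ.len ∧ τ.Extends σ

/-- `X(Γ)`: the maximal branches of `Γ`, i.e. the minimal elements of `2^{≤ω₁} ∖ Γ`. -/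
def XGamma (Γ : Set Node) : Set Node :=
  { x | x.len ≤ omega1 ∧ x ∉ Γ ∧ ∀ β < x.len, x.restrict β ∈ Γ }

/-- The index domain of the branch sequence `A_{Γ,x}`. -/
def branchDomain (Γ : Set Node) (x : Node) : Set Ordinal :=
  { α | α + 1 ≤ x.len ∧ x.restrict (α + 1) ∈ Γ }

/-- The branch sequence `A_{Γ,x}`, `a^x_α = a_{x ↾ (α+1)}`. -/
def branchSeq (a : Node → Set ℕ) (x : Node) : Ordinal → Set ℕ :=
  fun α => a (x.restrict (α + 1))

/-- A `𝕋`-algebra on the tree `Γ`. -/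
structure IsTAlgebra (Γ : Set Node) (a : Node → Set ℕ) : Prop where
  tree : GoodTree Γ
  empty_of_not_succ : ∀ σ ∈ Γ, ¬ IsSucc σ.len → a σ = ∅
  compl_dagger : ∀ σ ∈ Γ, IsSucc σ.len → a σ.dagger = (a σ)ᶜ
  branch_coherent : ∀ x : Node, x.len ≤ omega1 →
    CoherentOn (branchDomain Γ x) (branchSeq a x)
  branch_proper : ∀ x : Node, x.len ≤ omega1 →
    ProperOn (branchDomain Γ x) (branchSeq a x)

/-- The Boolean subalgebra of `P(ℕ)` generated by a family `G`. -/
inductive GenBool (G : Set (Set ℕ)) : Set ℕ → Prop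
  | basic (s : Set ℕ) : s ∈ G → GenBool G s
  | empty : GenBool G ∅
  | compl (s : Set ℕ) : GenBool G s → GenBool G sᶜ
  | inter (s t : Set ℕ) : GenBool G s → GenBool G t → GenBool G (s ∩ t)

/-- `B_Γ`: the Boolean subalgebra of `P(ℕ)` generated by `{a_σ : σ ∈ Γ}`. -/
def BGamma (Γ : Set Node) (a : Node → Set ℕ) : Set (Set ℕ) :=
  { b | GenBool { s | ∃ σ ∈ Γ, s = a σ } b }

/-- A finite intersection from the family `{ℕ ∖ a_{x↾(α+1)} : α + 1 ≤ λ_x}`. -/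
def finInterCompl (a : Node → Set ℕ) (x : Node) (F : Finset Ordinal) : Set ℕ :=
  ⋂ α ∈ F, (a (x.restrict (α + 1)))ᶜ

/-- The ultrafilter `U_x` on `B_Γ` generated by the finite intersections of
`{ℕ ∖ a_{x↾(α+1)} : α + 1 ≤ λ_x}`. -/
def Ux (Γ : Set Node) (a : Node → Set ℕ) (x : Node) : Set (Set ℕ) :=
  { b | b ∈ BGamma Γ a ∧
    ∃ F : Finset Ordinal, (∀ α ∈ F, α + 1 ≤ x.len) ∧ finInterCompl a x F ⊆ b }

/-- The Stone topology on `X(Γ)`, with subbasic open sets `{z : b ∈ U_z}`, `b ∈ B_Γ`. -/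
def stoneTop (Γ : Set Node) (a : Node → Set ℕ) :
    TopologicalSpace {z : Node // z ∈ XGamma Γ} :=
  TopologicalSpace.generateFrom
    { s | ∃ b ∈ BGamma Γ a, s = { z : {z : Node // z ∈ XGamma Γ} | b ∈ Ux Γ a z.1 } }

/-- An ultrafilter on a Boolean subalgebra `B` of `P(ℕ)`. -/
def IsUltrafilterOn (B U : Set (Set ℕ)) : Prop :=
  U ⊆ B ∧
  (∀ s ∈ U, ∀ t ∈ U, s ∩ t ∈ U) ∧
  (∀ s ∈ U, ∀ t ∈ B, s ⊆ t → t ∈ U) ∧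
  ∅ ∉ U ∧
  (∀ b ∈ B, Xor' (b ∈ U) (bᶜ ∈ U))

/-- The length-lexicographic (strict) order on finite binary strings. -/
def LenLexLT (σ τ : Node) : Prop :=
  σ.len < τ.len ∨ (σ.len = τ.len ∧ ∃ i < σ.len, σ.val i = false ∧ τ.val i = true ∧
    ∀ j < i, σ.val j = τ.val j)

/-- `e` is the standard length-lexicographic enumeration of `2^{<ω}`. -/
def IsStdEnum (e : ℕ → Node) : Prop :=
  (∀ k, (e k).len < Ordinal.omega0) ∧
  (∀ σ : Node, σ.len < Ordinal.omega0 → ∃ k, e k = σ) ∧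
  (∀ k l : ℕ, k < l → LenLexLT (e k) (e l))

/-- `⋃_{k<n} c^x_k` where `c^x_n = a^x_{e(n)} ∖ ⋃_{k<n} c^x_k` (recursively). -/
def cUnion (a : Node → Set ℕ) (x : Node) (eb : ℕ → Ordinal) : ℕ → Set ℕ
  | 0 => ∅
  | n + 1 => cUnion a x eb n ∪ (a (x.restrict (eb n + 1)) \ cUnion a x eb n)

/-- `c^x_n = a^x_{e(n)} ∖ ⋃_{k<n} c^x_k`. -/
def cSeq (a : Node → Set ℕ) (x : Node) (eb : ℕ → Ordinal) (n : ℕ) : Set ℕ :=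
  a (x.restrict (eb n + 1)) \ cUnion a x eb n

/-- `{x ⌢ σ : σ ∈ 2^{<ω}}`. -/
def appendSet (x : Node) : Set Node :=
  { τ | ∃ σ : Node, σ.len < Ordinal.omega0 ∧ τ = x.append σ }

/-- The defining equations of the extension `A_Γ[π,x]`:
`a_x = ∅`, `a_{x⌢(σ⌢0)} = ⋃{c^x_k : σ⌢1 ⊆ σ_{π(k)}}`, `a_{x⌢(σ⌢1)} = ℕ ∖ a_{x⌢(σ⌢0)}`. -/
def ExtEquations (e : ℕ → Node) (π : ℕ → ℕ) (a : Node → Set ℕ) (x : Node)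
    (eb : ℕ → Ordinal) (a' : Node → Set ℕ) : Prop :=
  a' x = ∅ ∧
  ∀ σ : Node, σ.len < Ordinal.omega0 →
    (a' (x.append (σ.snoc false)) =
      ⋃ k ∈ { k : ℕ | (e (π k)).Extends (σ.snoc true) }, cSeq a x eb k) ∧
    (a' (x.append (σ.snoc true)) = (a' (x.append (σ.snoc false)))ᶜ)

/-- The full tree `2^{<ω₁}`. -/
def GammaFull : Set Node := { σ | σ.len < omega1 }

theorem natLtOmega1 (n : ℕ) : (n : Ordinal) < omega1 := by
  have h1 : (n : Ordinal) < Ordinal.omega0 := Ordinal.nat_lt_omega0 n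
  have h2 : Ordinal.omega0 < omega1 := by
    rw [omega1, ← Cardinal.ord_aleph0]
    exact Cardinal.ord_lt_ord.2 (by rw [← Cardinal.aleph_zero]
                                    exact Cardinal.aleph_lt_aleph.2 zero_lt_one)
  exact h1.trans h2

/-!
For a coherent proper sequence `b`, attach to each `α < ω₁` the filter `F_α` on `ℕ` generated
by `b α` and the complements of the earlier `b ξ`. Properness makes `F_α` proper and coherence
makes it decide every later `b β`, so that `α ∈ â_β ↔ b β ∈ F_α` and `α ∉ â_β ↔ (b β)ᶜ ∈ F_α`.

Given a sequence in `ω₁`, suppose first that some `â_γ` contains infinitely many of its terms,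
and let `γ₀` be the least such `γ`. The terms lying in `â_γ₀` lie in only finitely many `â_ξ`,
`ξ < γ₀`, so eventually their filters contain every generator of `F_γ₀`; this is convergence
to `γ₀` in `τ`. Otherwise the sequence takes infinitely many values `α_n`, each `â_γ` containing
only finitely many of them. Flipping the bit of `x` at `α_n` gives distinct branches `z_n`, and
`U_{z_n}` contains every set of `F_{α_n}` lying in `B_Γ`; since `F_{α_n}` eventually contains each
`(b γ)ᶜ`, the `z_n` converge to `x` in the Stone topology, contrary to the hypothesis.
-/

section TraceFilter

variable {b : Ordinal → Set ℕ} {D : Set Ordinal} {α β γ : Ordinal} {s : Set ℕ}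

theorem unionFin_mono {F G : Finset Ordinal} (h : F ⊆ G) : unionFin b F ⊆ unionFin b G :=
  Set.biUnion_subset_biUnion_left (Finset.coe_subset.2 h)

/-- The filter generated by `b α` and the `(b ξ)ᶜ`, `ξ < α`; by definition
`α ∈ hatA b β ↔ α ≤ β ∧ b β ∈ traceFilter b α`. -/
def traceFilter (b : Ordinal → Set ℕ) (α : Ordinal) : Filter ℕ where
  sets := {s | ∃ F : Finset Ordinal, (∀ γ ∈ F, γ < α) ∧ b α \ s ⊆ unionFin b F}
  univ_sets := ⟨∅, by simp, by simp⟩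
  sets_of_superset := by
    rintro s t ⟨F, hF, hs⟩ hst
    exact ⟨F, hF, (sdiff_subset_sdiff_right hst).trans hs⟩
  inter_sets := by
    classical
    rintro s t ⟨F, hF, hs⟩ ⟨G, hG, ht⟩
    refine ⟨F ∪ G, by simpa [or_imp, forall_and] using And.intro hF hG, ?_⟩
    rw [sdiff_inter]
    exact union_subset (hs.trans (unionFin_mono Finset.subset_union_left))
      (ht.trans (unionFin_mono Finset.subset_union_right))

theorem mem_traceFilter_iff :
    s ∈ traceFilter b α ↔ ∃ F : Finset Ordinal, (∀ γ ∈ F, γ < α) ∧ b α \ s ⊆ unionFin b F :=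
  Iff.rfl

theorem self_mem_traceFilter : b α ∈ traceFilter b α :=
  ⟨∅, by simp, by simp⟩

theorem compl_mem_traceFilter_of_lt (h : β < α) : (b β)ᶜ ∈ traceFilter b α := by
  classical
  refine ⟨{β}, by simpa using h, ?_⟩
  simp [unionFin]

theorem ProperOn.traceFilter_neBot (hp : ProperOn D b) (hα : α ∈ D) :
    (traceFilter b α).NeBot := by
  refine ⟨fun hbot => ?_⟩
  obtain ⟨F, hF, hsub⟩ := mem_traceFilter_iff.1 (hbot ▸ Filter.mem_bot : ∅ ∈ traceFilter b α)
  exact hp α hα F hF (by simpa using hsub)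

theorem CoherentOn.mem_or_compl_mem_traceFilter (hc : CoherentOn D b) (h : α ≤ β) (hβ : β ∈ D) :
    b β ∈ traceFilter b α ∨ (b β)ᶜ ∈ traceFilter b α := by
  obtain ⟨F, hF, hinter | hsub⟩ := hc α β h hβ
  · exact Or.inr ⟨F, hF, by rwa [sdiff_compl]⟩
  · exact Or.inl ⟨F, hF, sdiff_subset_iff.2 hsub⟩

theorem mem_hatA_iff (hp : ProperOn D b) (hα : α ∈ D) :
    α ∈ hatA b β ↔ b β ∈ traceFilter b α := by
  have := hp.traceFilter_neBot hα
  refine ⟨And.right, fun h => ⟨not_lt.1 fun hlt => ?_, h⟩⟩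
  exact Filter.compl_notMem h (compl_mem_traceFilter_of_lt hlt)

theorem notMem_hatA_iff (hc : CoherentOn D b) (hp : ProperOn D b) (hα : α ∈ D) (hβ : β ∈ D) :
    α ∉ hatA b β ↔ (b β)ᶜ ∈ traceFilter b α := by
  have := hp.traceFilter_neBot hα
  rw [mem_hatA_iff hp hα]
  refine ⟨fun h => ?_, fun h hβα => Filter.compl_notMem hβα h⟩
  rcases lt_or_ge β α with hlt | hle
  · exact compl_mem_traceFilter_of_lt hlt
  · exact (hc.mem_or_compl_mem_traceFilter hle hβ).resolve_left h

theorem eventually_mem_traceFilter {ι : Type*} {l : Filter ι} {u : ι → Ordinal}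
    (hγ : ∀ᶠ i in l, b γ ∈ traceFilter b (u i))
    (hlt : ∀ ξ < γ, ∀ᶠ i in l, (b ξ)ᶜ ∈ traceFilter b (u i)) (hs : s ∈ traceFilter b γ) :
    ∀ᶠ i in l, s ∈ traceFilter b (u i) := by
  obtain ⟨F, hF, hsub⟩ := mem_traceFilter_iff.1 hs
  have hFev : ∀ᶠ i in l, ∀ ξ ∈ F, (b ξ)ᶜ ∈ traceFilter b (u i) :=
    (Filter.eventually_all_finset F).2 fun ξ hξ => hlt ξ (hF ξ hξ)
  filter_upwards [hγ, hFev] with i hγi hFi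
  refine Filter.mem_of_superset
    (Filter.inter_mem hγi ((Filter.biInter_finset_mem F).2 hFi)) ?_
  intro n ⟨hnγ, hnF⟩
  by_contra hns
  obtain ⟨ξ, hξ, hnξ⟩ := mem_iUnion₂.1 (hsub ⟨hnγ, hns⟩)
  exact mem_iInter₂.1 hnF ξ hξ hnξ

end TraceFilter

section Topology

variable {ι : Type*} {l : Filter ι} {b : Ordinal → Set ℕ}

theorem tendsto_tauSub {u : ι → {y : Ordinal // y < omega1}} {p : {y : Ordinal // y < omega1}}
    (h : ∀ β < omega1, ∀ᶠ i in l, ((u i).1 ∈ hatA b β ↔ p.1 ∈ hatA b β)) :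
    Filter.Tendsto u l (@nhds _ (tauSub b) p) := by
  rw [tauSub, @nhds_induced _ _ (tau omega1 b), Filter.tendsto_comap_iff, tau,
    TopologicalSpace.tendsto_nhds_generateFrom_iff]
  rintro s ⟨β, hβ, rfl | rfl⟩ hps
  · exact (h β hβ).mono fun i hi => hi.2 hps
  · exact (h β hβ).mono fun i hi => mt hi.1 hps

theorem tendsto_tauSub_of_traceFilter (hc : CoherentOn (Iio omega1) b)
    (hp : ProperOn (Iio omega1) b) {u : ι → {y : Ordinal // y < omega1}}
    {p : {y : Ordinal // y < omega1}}
    (h : ∀ s ∈ traceFilter b p.1, ∀ᶠ i in l, s ∈ traceFilter b (u i).1) :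
    Filter.Tendsto u l (@nhds _ (tauSub b) p) := by
  refine tendsto_tauSub fun β hβ => ?_
  by_cases hpβ : p.1 ∈ hatA b β
  · filter_upwards [h _ ((mem_hatA_iff hp p.2).1 hpβ)] with i hi
    exact iff_of_true ((mem_hatA_iff hp (u i).2).2 hi) hpβ
  · filter_upwards [h _ ((notMem_hatA_iff hc hp p.2 hβ).1 hpβ)] with i hi
    exact iff_of_false ((notMem_hatA_iff hc hp (u i).2 hβ).2 hi) hpβ

end Topology

theorem exists_subseq_tendsto_tauSub {b : Ordinal → Set ℕ} (hc : CoherentOn (Iio omega1) b)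
    (hp : ProperOn (Iio omega1) b) (f : ℕ → {y : Ordinal // y < omega1}) {γ : Ordinal}
    (hγ : γ < omega1) (hinf : {n | (f n).1 ∈ hatA b γ}.Infinite) :
    ∃ g : ℕ → ℕ, StrictMono g ∧ ∃ p : {y : Ordinal // y < omega1},
      Filter.Tendsto (f ∘ g) Filter.atTop (@nhds _ (tauSub b) p) := by
  obtain ⟨γ₀, ⟨hγ₀, hinf₀⟩, hmin⟩ := wellFounded_lt.has_min
    {γ | γ < omega1 ∧ {n | (f n).1 ∈ hatA b γ}.Infinite} ⟨γ, hγ, hinf⟩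
  set g := Nat.nth fun n => (f n).1 ∈ hatA b γ₀
  have hg : StrictMono g := Nat.nth_strictMono hinf₀
  refine ⟨g, hg, ⟨γ₀, hγ₀⟩, tendsto_tauSub_of_traceFilter hc hp fun s hs => ?_⟩
  refine eventually_mem_traceFilter (.of_forall fun n => (Nat.nth_mem_of_infinite hinf₀ n).2)
    (fun ξ hξ => ?_) hs
  have hfin : (g ⁻¹' {n | (f n).1 ∈ hatA b ξ}).Finite :=
    (not_infinite.1 fun h => hmin ξ ⟨hξ.trans hγ₀, h⟩ hξ).preimage hg.injective.injOn
  rw [← Nat.cofinite_eq_atTop]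
  exact hfin.eventually_cofinite_notMem.mono fun n hn =>
    (notMem_hatA_iff hc hp (f (g n)).2 (hξ.trans hγ₀)).1 hn

namespace Node

attribute [ext] Node

theorem restrict_val (x : Node) (β α : Ordinal) :
    (x.restrict β).val α = if α < β then x.val α else false := rfl

theorem dagger_of_len_eq_succ {σ : Node} {δ : Ordinal} (h : σ.len = δ + 1) :
    σ.dagger.len = σ.len ∧ ∀ α, σ.dagger.val α = if α = δ then !σ.val α else σ.val α := by
  have hs : IsSucc σ.len := ⟨δ, h⟩
  have hδ : Classical.choose hs = δ :=
    Order.succ_injective <| by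
      simpa only [Order.succ_eq_add_one] using (Classical.choose_spec hs).symm.trans h
  rw [dagger, dif_pos hs]
  exact ⟨rfl, fun α => by simp only [hδ]⟩

open Classical in
def flip (x : Node) (δ : Ordinal) : Node where
  len := x.len
  val := fun α => if α = δ ∧ α < x.len then !x.val α else x.val α
  canon := fun α h => by simp [not_lt.2 h, x.canon α h]

theorem flip_restrict_of_le {x : Node} {β δ : Ordinal} (h : β ≤ δ) :
    (x.flip δ).restrict β = x.restrict β := by
  ext α
  · rfl
  · simp only [restrict_val, flip]
    split_ifs with h₁ h₂ <;> first | rfl | exact absurd (h₂.1 ▸ h₁) (not_lt.2 h)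

theorem flip_restrict_succ {x : Node} {δ : Ordinal} (hδ : δ < x.len) :
    (x.flip δ).restrict (δ + 1) = (x.restrict (δ + 1)).dagger := by
  obtain ⟨hlen, hval⟩ := dagger_of_len_eq_succ (σ := x.restrict (δ + 1)) rfl
  ext α
  · exact hlen.symm
  · rw [hval, restrict_val, restrict_val]
    simp only [flip]
    by_cases hα : α = δ
    · subst hα; simp [hδ]
    · simp [hα]

theorem flip_injOn (x : Node) : InjOn x.flip (Iio x.len) := by
  intro δ hδ δ' _ h
  by_contra hne
  have := congrArg (fun y : Node => y.val δ) h
  simp only [flip, hne, false_and, if_false, true_and, if_pos (mem_Iio.1 hδ)] at this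
  exact Bool.not_ne_self _ this

end Node

theorem add_one_lt_omega1 {α : Ordinal} (h : α < omega1) : α + 1 < omega1 :=
  (Cardinal.isSuccLimit_ord (Cardinal.aleph0_le_aleph 1)).add_one_lt h

section Branch

variable {a : Node → Set ℕ} {x : Node}

theorem mem_XGamma_GammaFull (hx : x.len = omega1) : x ∈ XGamma GammaFull :=
  ⟨hx.le, fun h => (show x.len < omega1 from h).ne hx, fun β hβ => show β < omega1 from hx ▸ hβ⟩

theorem branchDomain_GammaFull (hx : x.len = omega1) : branchDomain GammaFull x = Iio omega1 := by
  ext α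
  refine ⟨fun h => ?_, fun h => ⟨hx ▸ (add_one_lt_omega1 h).le, add_one_lt_omega1 h⟩⟩
  exact (Order.lt_add_one_iff.2 le_rfl).trans (show α + 1 < omega1 from h.2)

theorem mem_Ux_flip (hT : IsTAlgebra GammaFull a) (hx : x.len = omega1) {δ : Ordinal}
    (hδ : δ < omega1) {s : Set ℕ} (hsB : s ∈ BGamma GammaFull a)
    (hs : s ∈ traceFilter (branchSeq a x) δ) : s ∈ Ux GammaFull a (x.flip δ) := by
  classical
  obtain ⟨F, hF, hsub⟩ := mem_traceFilter_iff.1 hs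
  have hflipδ : a ((x.flip δ).restrict (δ + 1)) = (branchSeq a x δ)ᶜ := by
    rw [Node.flip_restrict_succ (hx ▸ hδ)]
    exact hT.compl_dagger _ (add_one_lt_omega1 hδ) ⟨δ, rfl⟩
  refine ⟨hsB, insert δ F, fun η hη => ?_, fun m hm => ?_⟩
  · rcases Finset.mem_insert.1 hη with rfl | hη
    exacts [hx ▸ (add_one_lt_omega1 hδ).le, hx ▸ (add_one_lt_omega1 ((hF η hη).trans hδ)).le]
  · simp only [finInterCompl, Finset.set_biInter_insert, hflipδ, compl_compl] at hm
    by_contra hms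
    obtain ⟨ξ, hξ, hmξ⟩ := mem_iUnion₂.1 (hsub ⟨hm.1, hms⟩)
    have := mem_iInter₂.1 hm.2 ξ hξ
    rw [Node.flip_restrict_of_le (Order.add_one_le_of_lt (hF ξ hξ))] at this
    exact this hmξ

theorem tendsto_flip_stoneTop (hT : IsTAlgebra GammaFull a) (hx : x.len = omega1)
    {ι : Type*} {l : Filter ι} {δ : ι → Ordinal} (hδ : ∀ i, δ i < omega1)
    (h : ∀ γ < omega1, ∀ᶠ i in l, (branchSeq a x γ)ᶜ ∈ traceFilter (branchSeq a x) (δ i)) :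
    Filter.Tendsto (fun i => (⟨x.flip (δ i), mem_XGamma_GammaFull hx⟩ : XGamma GammaFull)) l
      (@nhds _ (stoneTop GammaFull a) ⟨x, mem_XGamma_GammaFull hx⟩) := by
  rw [stoneTop, TopologicalSpace.tendsto_nhds_generateFrom_iff]
  rintro _ ⟨s, hsB, rfl⟩ ⟨-, F, hF, hFs⟩
  have hFev : ∀ᶠ i in l, ∀ γ ∈ F, (branchSeq a x γ)ᶜ ∈ traceFilter (branchSeq a x) (δ i) :=
    (Filter.eventually_all_finset F).2 fun γ hγ =>
      h γ (Order.add_one_le_iff.1 (hx ▸ hF γ hγ))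
  filter_upwards [hFev] with i hi
  exact mem_Ux_flip hT hx (hδ i) hsB
    (Filter.mem_of_superset ((Filter.biInter_finset_mem F).2 hi) hFs)

end Branch

theorem exists_injective_eventually_notMem_hatA {b : Ordinal → Set ℕ}
    (f : ℕ → {y : Ordinal // y < omega1})
    (h : ∀ γ < omega1, {n | (f n).1 ∈ hatA b γ}.Finite) :
    ∃ δ : ℕ → {y : Ordinal // y < omega1}, Function.Injective δ ∧
      ∀ γ < omega1, ∀ᶠ n in Filter.atTop, (δ n).1 ∉ hatA b γ := by
  have hR : (range f).Infinite := fun hfin => infinite_univ <| by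
    simpa using hfin.preimage' fun v _ => (h v.1 v.2).subset fun n (hn : f n = v) =>
      show (f n).1 ∈ hatA b v.1 from hn ▸ ⟨le_rfl, self_mem_traceFilter⟩
  set e := hR.natEmbedding
  have he : Function.Injective fun n => (e n).1 := Subtype.val_injective.comp e.injective
  refine ⟨fun n => (e n).1, he, fun γ hγ => ?_⟩
  have hfin : ((fun n => (e n).1) ⁻¹' (f '' {n | (f n).1 ∈ hatA b γ})).Finite :=
    ((h γ hγ).image f).preimage he.injOn
  rw [← Nat.cofinite_eq_atTop]
  refine hfin.eventually_cofinite_notMem.mono fun n hn hmem => hn ?_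
  obtain ⟨m, hm⟩ := (e n).2
  exact ⟨m, show (f m).1 ∈ hatA b γ from hm ▸ hmem, hm⟩

/-- If `A_Γ` is a `𝕋`-algebra on `Γ = 2^{<ω₁}` and no injective sequence converges
in the Stone topology on `X(Γ) = 2^{ω₁}`, then for every `x ∈ 2^{ω₁}` the space
`Y_x` (the set `ω₁` with the topology inherited from `(ω₁+1, τ(A_{Γ,x}))`) is
sequentially compact. -/
theorem stmt16 (a : Node → Set ℕ) (hT : IsTAlgebra GammaFull a)
    (hnoconv : ∀ (u : ℕ → {z : Node // z ∈ XGamma GammaFull}), Function.Injective u →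
      ∀ z : {z : Node // z ∈ XGamma GammaFull},
        ¬ Filter.Tendsto u Filter.atTop (@nhds _ (stoneTop GammaFull a) z)) :
    ∀ x : Node, x.len = omega1 →
      ∀ f : ℕ → {y : Ordinal // y < omega1},
        ∃ g : ℕ → ℕ, StrictMono g ∧ ∃ p : {y : Ordinal // y < omega1},
          Filter.Tendsto (f ∘ g) Filter.atTop (@nhds _ (tauSub (branchSeq a x)) p) := by
  intro x hx f
  have hc : CoherentOn (Iio omega1) (branchSeq a x) :=
    branchDomain_GammaFull hx ▸ hT.branch_coherent x hx.le
  have hp : ProperOn (Iio omega1) (branchSeq a x) :=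
    branchDomain_GammaFull hx ▸ hT.branch_proper x hx.le
  by_cases hS : ∃ γ < omega1, {n | (f n).1 ∈ hatA (branchSeq a x) γ}.Infinite
  · obtain ⟨γ, hγ, hinf⟩ := hS
    exact exists_subseq_tendsto_tauSub hc hp f hγ hinf
  · push Not at hS
    obtain ⟨δ, hδinj, hδ⟩ := exists_injective_eventually_notMem_hatA f hS
    refine absurd (tendsto_flip_stoneTop hT hx (fun n => (δ n).2) fun γ hγ => ?_)
      (hnoconv _ (fun m n hmn => hδinj (Subtype.ext ?_)) _)
    · exact (hδ γ hγ).mono fun n hn => (notMem_hatA_iff hc hp (δ n).2 hγ).1 hn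
    · exact x.flip_injOn (hx.symm ▸ (δ m).2) (hx.symm ▸ (δ n).2) (congrArg Subtype.val hmn)

end
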